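/- Let i ∈ B. Then the Shapley value of i in the n-player game on N equals its Shapley value in the M-player subgame on B: ∑_{S ⊆ N \ {i}} (|S|!(n−|S|−1)!/n!)(u(S ∪ {i}) − u(S)) = ∑_{T ⊆ B \ {i}} (|T|!(M−|T|−1)!/M!)(u(T ∪ {i}) − u(T)). -/

import Mathlib

/-!
Players outside the bucket `B` are null players of `u`, and deleting a null player `j` does not
change anyone's Shapley value: the coalitions `S` and `S ∪ {j}` of the larger game carry the same
marginal contribution of `i`, and their weights add up to the weight of `S` in the smaller game,
`k! (n-k-1)!/n! + (k+1)! (n-k-2)!/n! = k! (n-k-2)!/(n-1)!`.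
-/

open Finset

/-- Bucket-vote utility: `u(S) = |S ∩ B⁺| / |S ∩ B|` if `S ∩ B ≠ ∅`, else `0`. -/
noncomputable def u {α : Type*} [DecidableEq α] (B Bp : Finset α) (S : Finset α) : ℝ :=
  if (S ∩ B).Nonempty then ((S ∩ Bp).card : ℝ) / ((S ∩ B).card : ℝ) else 0

/-- Shapley value of player `i` in the game on `N` with utility `u B Bp`. -/
noncomputable def shapley {α : Type*} [DecidableEq α] (N B Bp : Finset α) (i : α) : ℝ :=
  ∑ S ∈ (N.erase i).powerset,
    ((S.card.factorial * (N.card - S.card - 1).factorial : ℝ) / (N.card.factorial : ℝ))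
      * (u B Bp (insert i S) - u B Bp S)

noncomputable def shapleyWeight (n k : ℕ) : ℝ :=
  (k.factorial * (n - k - 1).factorial : ℝ) / n.factorial

noncomputable def shapleyValue {α : Type*} [DecidableEq α] (N : Finset α) (v : Finset α → ℝ)
    (i : α) : ℝ :=
  ∑ S ∈ (N.erase i).powerset, shapleyWeight N.card S.card * (v (insert i S) - v S)

theorem shapley_eq_shapleyValue {α : Type*} [DecidableEq α] (N B Bp : Finset α) (i : α) :
    shapley N B Bp i = shapleyValue N (u B Bp) i :=
  rfl

theorem shapleyWeight_add_shapleyWeight_succ {n k : ℕ} (h : k ≤ n) :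
    shapleyWeight (n + 2) k + shapleyWeight (n + 2) (k + 1) = shapleyWeight (n + 1) k := by
  obtain ⟨m, rfl⟩ : ∃ m, n = k + m := ⟨n - k, by omega⟩
  rw [shapleyWeight, shapleyWeight, shapleyWeight, show k + m + 2 - k - 1 = m + 1 by omega,
    show k + m + 2 - (k + 1) - 1 = m by omega, show k + m + 1 - k - 1 = m by omega,
    Nat.factorial_succ (k + m + 1), Nat.factorial_succ m, Nat.factorial_succ k]
  push_cast
  field_simp
  ring

section NullPlayer

variable {α : Type*} [DecidableEq α] {v : Finset α → ℝ}

theorem shapleyValue_insert_of_null {N : Finset α} {i j : α} (hi : i ∈ N) (hjN : j ∉ N)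
    (hji : j ≠ i) (hj : ∀ S, v (insert j S) = v S) :
    shapleyValue (insert j N) v i = shapleyValue N v i := by
  have hjP : j ∉ N.erase i := fun h ↦ hjN (mem_of_mem_erase h)
  have hN : N.card = (N.erase i).card + 1 := (card_erase_add_one hi).symm
  have hcard : (insert j N).card = (N.erase i).card + 2 := by
    rw [card_insert_of_notMem hjN, hN]
  rw [shapleyValue, shapleyValue, erase_insert_of_ne hji, sum_powerset_insert hjP,
    ← sum_add_distrib, hcard]
  refine sum_congr rfl fun S hS ↦ ?_
  have hSP : S.card ≤ (N.erase i).card := card_le_card (mem_powerset.mp hS)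
  have hjS : j ∉ S := fun h ↦ hjP (mem_powerset.mp hS h)
  rw [card_insert_of_notMem hjS, insert_comm, hj, hj, ← add_mul,
    shapleyWeight_add_shapleyWeight_succ hSP, hN]

theorem shapleyValue_union_of_null {D B : Finset α} {i : α} (hiB : i ∈ B) (hiD : i ∉ D)
    (hD : ∀ j ∈ D, ∀ S, v (insert j S) = v S) :
    shapleyValue (D ∪ B) v i = shapleyValue B v i := by
  induction D using Finset.induction_on with
  | empty => rw [empty_union]
  | insert j D _ ih =>
    have ih' := ih (fun h ↦ hiD (mem_insert_of_mem h)) (fun k hk ↦ hD k (mem_insert_of_mem hk))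
    rw [insert_union]
    by_cases hj : j ∈ D ∪ B
    · rw [insert_eq_of_mem hj, ih']
    · have hji : j ≠ i := by
        rintro rfl
        exact hiD (mem_insert_self j D)
      rw [shapleyValue_insert_of_null (mem_union_right D hiB) hj hji (hD j (mem_insert_self j D)),
        ih']

end NullPlayer

theorem u_insert_of_notMem {α : Type*} [DecidableEq α] {B Bp : Finset α} (hBp : Bp ⊆ B)
    {j : α} (hj : j ∉ B) (S : Finset α) : u B Bp (insert j S) = u B Bp S := by
  simp only [u, insert_inter_of_notMem hj, insert_inter_of_notMem (fun h ↦ hj (hBp h))]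

theorem stmt1_general {α : Type*} [DecidableEq α] (N B Bp : Finset α)
    (hBpB : Bp ⊆ B) (hBN : B ⊆ N)
    (i : α) (hi : i ∈ B) :
    shapley N B Bp i =
      ∑ T ∈ (B.erase i).powerset,
        ((T.card.factorial * (B.card - T.card - 1).factorial : ℝ) / (B.card.factorial : ℝ))
          * (u B Bp (insert i T) - u B Bp T) := by
  rw [shapley_eq_shapleyValue, ← sdiff_union_of_subset hBN]
  exact shapleyValue_union_of_null hi (fun h ↦ (mem_sdiff.mp h).2 hi)
    (fun j hj ↦ u_insert_of_notMem hBpB (mem_sdiff.mp hj).2)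

/-- The Shapley value of a bucket member `i ∈ B` in the `n`-player game on `N`
equals its Shapley value in the `M`-player subgame on `B`. -/
theorem stmt1 {α : Type*} [DecidableEq α] (N B Bp : Finset α)
    (hBpB : Bp ⊆ B) (hBN : B ⊆ N) (hBne : B.Nonempty)
    (i : α) (hi : i ∈ B) :
    shapley N B Bp i =
      ∑ T ∈ (B.erase i).powerset,
        ((T.card.factorial * (B.card - T.card - 1).factorial : ℝ) / (B.card.factorial : ℝ))
          * (u B Bp (insert i T) - u B Bp T) :=
  stmt1_general N B Bp hBpB hBN i hi
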